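/- Suppose p ≥ 1 satisfies p ≡ 1 (mod 2(n−1)); such p is odd. Then H_{n,p} = ℤ^n / Im(1 + ψ^p) is isomorphic to ℤ if n is odd, and isomorphic to ℤ² if n is even. -/

import Mathlib

/-- The class of the `i`-th indecomposable projective module over the linearly oriented
quiver of type `D_n` (vertices `0, 1, …, n-1`), written in the basis `e_0, …, e_{n-1}` of
classes of simple modules: `π_i = e_i + e_2 + ⋯ + e_{n-1}` for `i ∈ {0,1}` and
`π_i = e_i + e_{i+1} + ⋯ + e_{n-1}` for `2 ≤ i ≤ n-1`. -/
def piD (n : ℕ) (i : Fin n) : Fin n → ℤ :=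
  if (i : ℕ) ≤ 1 then fun j => if j = i ∨ 2 ≤ (j : ℕ) then 1 else 0
  else fun j => if (i : ℕ) ≤ (j : ℕ) then 1 else 0

/-- The class of the `i`-th indecomposable injective module:
`ι_i = e_i` for `i ∈ {0,1}` and `ι_i = e_0 + e_1 + ⋯ + e_i` for `2 ≤ i ≤ n-1`. -/
def iotaD (n : ℕ) (i : Fin n) : Fin n → ℤ :=
  if (i : ℕ) ≤ 1 then Pi.single i 1
  else fun j => if (j : ℕ) ≤ (i : ℕ) then 1 else 0
section Aux
variable (n : ℕ)

noncomputable def E (k : ℕ) (hk : k < n) : Fin n → ℤ := Pi.single (⟨k, hk⟩ : Fin n) 1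

lemma E_apply (k : ℕ) (hk : k < n) (t : Fin n) :
    E n k hk t = if (t : ℕ) = k then 1 else 0 := by
  simp [E, Pi.single_apply, Fin.ext_iff]

lemma E_congr (a b : ℕ) (h : a = b) (ha : a < n) (hb : b < n) : E n a ha = E n b hb := by
  subst h; rfl

lemma piD_apply (i t : Fin n) : piD n i t =
    if (i : ℕ) ≤ 1 then (if (t : ℕ) = (i : ℕ) ∨ 2 ≤ (t : ℕ) then (1:ℤ) else 0)
    else (if (i : ℕ) ≤ (t : ℕ) then 1 else 0) := by
  rw [piD, apply_ite (fun f : Fin n → ℤ => f t)]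
  simp [Fin.ext_iff]

lemma iotaD_apply (i t : Fin n) : iotaD n i t =
    if (i : ℕ) ≤ 1 then (if (t : ℕ) = (i : ℕ) then (1:ℤ) else 0)
    else (if (t : ℕ) ≤ (i : ℕ) then 1 else 0) := by
  rw [iotaD, apply_ite (fun f : Fin n → ℤ => f t)]
  simp [Pi.single_apply, Fin.ext_iff]

/-- the all-ones vector -/
def ones : Fin n → ℤ := fun _ => 1

/-- `-(e_0 + ⋯ + e_{n-2})`, the image of `e_{n-1}` under `1+ψ` -/
def W : Fin n → ℤ := fun t => if (t : ℕ) ≤ n - 2 then -1 else 0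

/-- `e_0 + e_1 + 2(e_2 + ⋯ + e_{m+1})` -/
def S (m : ℕ) : Fin n → ℤ := fun t => if (t : ℕ) ≤ 1 then 1 else if (t : ℕ) ≤ m + 1 then 2 else 0

/-- `e_a + ⋯ + e_{n-2}` -/
def T (a : ℕ) : Fin n → ℤ := fun t => if a ≤ (t : ℕ) ∧ (t : ℕ) ≤ n - 2 then 1 else 0

variable (ψ : Module.End ℤ (Fin n → ℤ)) (hψ : ∀ i, ψ (piD n i) = - iotaD n i)

lemma psi_mid (hψ : ∀ i, ψ (piD n i) = - iotaD n i) (j : ℕ) (h2 : 2 ≤ j) (hj : j + 1 ≤ n - 1)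
    (h1 : j < n) (h1' : j + 1 < n) :
    ψ (E n j h1) = E n (j+1) h1' := by
  have he : E n j h1 = piD n ⟨j, h1⟩ - piD n ⟨j+1, h1'⟩ := by
    funext t
    simp only [E_apply, piD_apply, Pi.sub_apply]
    split_ifs <;> omega
  rw [he, map_sub, hψ, hψ]
  funext t
  simp only [E_apply, iotaD_apply, Pi.sub_apply, Pi.neg_apply]
  split_ifs <;> omega

lemma psi0 (hψ : ∀ i, ψ (piD n i) = - iotaD n i) (hn : 3 ≤ n) :
    ψ (E n 0 (by omega)) = E n 1 (by omega) + E n 2 (by omega) := by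
  have he : E n 0 (by omega) = piD n ⟨0, by omega⟩ - piD n ⟨2, by omega⟩ := by
    funext t
    simp only [E_apply, piD_apply, Pi.sub_apply]
    split_ifs <;> omega
  rw [he, map_sub, hψ, hψ]
  funext t
  simp only [E_apply, iotaD_apply, Pi.sub_apply, Pi.neg_apply, Pi.add_apply]
  split_ifs <;> omega

lemma psi1 (hψ : ∀ i, ψ (piD n i) = - iotaD n i) (hn : 3 ≤ n) :
    ψ (E n 1 (by omega)) = E n 0 (by omega) + E n 2 (by omega) := by
  have he : E n 1 (by omega) = piD n ⟨1, by omega⟩ - piD n ⟨2, by omega⟩ := by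
    funext t
    simp only [E_apply, piD_apply, Pi.sub_apply]
    split_ifs <;> omega
  rw [he, map_sub, hψ, hψ]
  funext t
  simp only [E_apply, iotaD_apply, Pi.sub_apply, Pi.neg_apply, Pi.add_apply]
  split_ifs <;> omega

lemma psi_last (hψ : ∀ i, ψ (piD n i) = - iotaD n i) (hn : 3 ≤ n) :
    ψ (E n (n-1) (by omega)) = - ones n := by
  have he : E n (n-1) (by omega) = piD n ⟨n-1, by omega⟩ := by
    funext t
    simp only [E_apply, piD_apply]
    have ht := t.isLt
    split_ifs <;> omega
  rw [he, hψ]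
  funext t
  have ht := t.isLt
  simp only [iotaD_apply, Pi.neg_apply, ones]
  split_ifs <;> omega

lemma psi_ones (hψ : ∀ i, ψ (piD n i) = - iotaD n i) (hn : 3 ≤ n) :
    ψ (ones n) = E n 2 (by omega) := by
  have he : ones n = piD n ⟨0, by omega⟩ + piD n ⟨1, by omega⟩ - piD n ⟨2, by omega⟩ := by
    funext t
    simp only [ones, piD_apply, Pi.sub_apply, Pi.add_apply]
    split_ifs <;> omega
  rw [he, map_sub, map_add, hψ, hψ, hψ]
  funext t
  simp only [E_apply, iotaD_apply, Pi.sub_apply, Pi.neg_apply, Pi.add_apply]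
  split_ifs <;> omega

lemma psi_diff (hψ : ∀ i, ψ (piD n i) = - iotaD n i) (hn : 3 ≤ n) :
    ψ (E n 0 (by omega) - E n 1 (by omega)) = -(E n 0 (by omega) - E n 1 (by omega)) := by
  have he : E n 0 (by omega) - E n 1 (by omega) = piD n ⟨0, by omega⟩ - piD n ⟨1, by omega⟩ := by
    funext t
    simp only [E_apply, piD_apply, Pi.sub_apply]
    split_ifs <;> omega
  rw [he, map_sub, hψ, hψ]
  funext t
  simp only [E_apply, iotaD_apply, piD_apply, Pi.sub_apply, Pi.neg_apply]
  split_ifs <;> omega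

lemma psi_S (hψ : ∀ i, ψ (piD n i) = - iotaD n i) (hn : 3 ≤ n) (m : ℕ) (hm : m + 3 ≤ n) :
    ψ (S n m) = S n (m+1) := by
  have he : S n m = piD n ⟨0, by omega⟩ + piD n ⟨1, by omega⟩
      - piD n ⟨m+2, by omega⟩ - piD n ⟨m+2, by omega⟩ := by
    funext t
    simp only [S, piD_apply, Pi.sub_apply, Pi.add_apply]
    split_ifs <;> omega
  rw [he, map_sub, map_sub, map_add, hψ, hψ, hψ]
  funext t
  simp only [S, iotaD_apply, Pi.sub_apply, Pi.neg_apply, Pi.add_apply]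
  split_ifs <;> omega

lemma psi_S_last (hψ : ∀ i, ψ (piD n i) = - iotaD n i) (hn : 3 ≤ n) :
    ψ (S n (n-2)) = -(E n 0 (by omega) + E n 1 (by omega)) := by
  have he : S n (n-2) = piD n ⟨0, by omega⟩ + piD n ⟨1, by omega⟩ := by
    funext t
    have ht := t.isLt
    simp only [S, piD_apply, Pi.add_apply]
    split_ifs <;> omega
  rw [he, map_add, hψ, hψ]
  funext t
  simp only [E_apply, iotaD_apply, Pi.neg_apply, Pi.add_apply]
  split_ifs <;> omega

end Aux
section Pow
variable (n : ℕ) (ψ : Module.End ℤ (Fin n → ℤ))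

lemma pow_mid (hψ : ∀ i, ψ (piD n i) = - iotaD n i) :
    ∀ m a, 2 ≤ a → a + m ≤ n - 1 → ∀ (ha : a < n) (ham : a + m < n),
      (ψ ^ m) (E n a ha) = E n (a+m) ham := by
  intro m
  induction m with
  | zero => intro a _ _ ha ham; simp [E_congr n a (a+0) rfl]
  | succ m ih =>
    intro a h2 hle ha ham
    have hstep : ψ (E n a ha) = E n (a+1) (by omega) :=
      psi_mid n ψ hψ a h2 (by omega) ha (by omega)
    rw [pow_succ, Module.End.mul_apply, hstep,
      ih (a+1) (by omega) (by omega) (by omega) (by omega)]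
    exact E_congr n _ _ (by omega) _ _

lemma pow_S (hψ : ∀ i, ψ (piD n i) = - iotaD n i) (hn : 3 ≤ n) :
    ∀ m, m ≤ n - 2 → (ψ ^ m) (S n 0) = S n m := by
  intro m
  induction m with
  | zero => intro _; simp
  | succ m ih =>
    intro hm
    rw [pow_succ', Module.End.mul_apply, ih (by omega)]
    exact psi_S n ψ hψ hn m (by omega)

lemma pow_diff (hψ : ∀ i, ψ (piD n i) = - iotaD n i) (hn : 3 ≤ n) :
    ∀ m, (ψ ^ m) (E n 0 (by omega) - E n 1 (by omega))
      = (-1 : ℤ) ^ m • (E n 0 (by omega) - E n 1 (by omega)) := by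
  intro m
  induction m with
  | zero => simp
  | succ m ih =>
    rw [pow_succ', Module.End.mul_apply, ih, map_smul, psi_diff n ψ hψ hn, pow_succ]
    rw [smul_neg, ← neg_smul, mul_comm, mul_smul]
    norm_num

lemma pow_n1_high (hψ : ∀ i, ψ (piD n i) = - iotaD n i) (hn : 3 ≤ n)
    (j : ℕ) (h2 : 2 ≤ j) (hj : j ≤ n - 1) (hjn : j < n) :
    (ψ ^ (n-1)) (E n j hjn) = -(E n j hjn) := by
  have hdecomp : ψ ^ (n-1) = ψ ^ (j-2) * ψ * ψ * ψ ^ (n-1-j) := by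
    rw [← pow_succ, ← pow_succ, ← pow_add]
    congr 1
    omega
  rw [hdecomp]
  simp only [Module.End.mul_apply]
  rw [pow_mid n ψ hψ (n-1-j) j h2 (by omega) hjn (by omega),
    E_congr n (j + (n-1-j)) (n-1) (by omega) _ (by omega),
    psi_last n ψ hψ hn, map_neg, psi_ones n ψ hψ hn, map_neg,
    pow_mid n ψ hψ (j-2) 2 le_rfl (by omega) (by omega) (by omega)]
  rw [E_congr n (2 + (j-2)) j (by omega) _ hjn]

lemma pow_n1_sum (hψ : ∀ i, ψ (piD n i) = - iotaD n i) (hn : 3 ≤ n) :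
    (ψ ^ (n-1)) (E n 0 (by omega) + E n 1 (by omega))
      = -(E n 0 (by omega) + E n 1 (by omega)) := by
  have hS0 : S n 0 = E n 0 (by omega) + E n 1 (by omega) := by
    funext t
    simp only [S, E_apply, Pi.add_apply]
    split_ifs <;> omega
  have hdecomp : ψ ^ (n-1) = ψ * ψ ^ (n-2) := by
    rw [← pow_succ']
    congr 1
    omega
  rw [← hS0, hdecomp, Module.End.mul_apply, pow_S n ψ hψ hn (n-2) le_rfl,
    psi_S_last n ψ hψ hn, hS0]

lemma pow_n1_0_odd (hψ : ∀ i, ψ (piD n i) = - iotaD n i) (hn : 3 ≤ n) (hodd : Odd n) :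
    (ψ ^ (n-1)) (E n 0 (by omega)) = -(E n 1 (by omega)) ∧
    (ψ ^ (n-1)) (E n 1 (by omega)) = -(E n 0 (by omega)) := by
  have hd := pow_diff n ψ hψ hn (n-1)
  have hs := pow_n1_sum n ψ hψ hn
  have hpow : (-1 : ℤ) ^ (n-1) = 1 := by
    apply Even.neg_one_pow
    rcases hodd with ⟨k, hk⟩
    exact ⟨k, by omega⟩
  rw [hpow, one_smul] at hd
  constructor
  · have key : (2:ℤ) • ((ψ ^ (n-1)) (E n 0 (by omega))) =
        -(E n 0 (by omega) + E n 1 (by omega)) + (E n 0 (by omega) - E n 1 (by omega)) := by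
      rw [← hs, ← hd, ← map_add, ← map_smul]
      congr 1
      module
    funext t
    have h := congrFun key t
    simp only [Pi.smul_apply, Pi.add_apply, Pi.neg_apply, Pi.sub_apply, E_apply, smul_eq_mul] at h ⊢
    split_ifs at h ⊢ <;> omega
  · have key : (2:ℤ) • ((ψ ^ (n-1)) (E n 1 (by omega))) =
        -(E n 0 (by omega) + E n 1 (by omega)) - (E n 0 (by omega) - E n 1 (by omega)) := by
      rw [← hs, ← hd, ← map_sub, ← map_smul]
      congr 1
      module
    funext t
    have h := congrFun key t
    simp only [Pi.smul_apply, Pi.add_apply, Pi.neg_apply, Pi.sub_apply, E_apply, smul_eq_mul] at h ⊢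
    split_ifs at h ⊢ <;> omega

lemma pow_n1_0_even (hψ : ∀ i, ψ (piD n i) = - iotaD n i) (hn : 3 ≤ n) (heven : Even n) :
    (ψ ^ (n-1)) (E n 0 (by omega)) = -(E n 0 (by omega)) ∧
    (ψ ^ (n-1)) (E n 1 (by omega)) = -(E n 1 (by omega)) := by
  have hd := pow_diff n ψ hψ hn (n-1)
  have hs := pow_n1_sum n ψ hψ hn
  have hpow : (-1 : ℤ) ^ (n-1) = -1 := by
    apply Odd.neg_one_pow
    rcases heven with ⟨k, hk⟩
    exact ⟨k-1, by omega⟩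
  rw [hpow] at hd
  constructor
  · have key : (2:ℤ) • ((ψ ^ (n-1)) (E n 0 (by omega))) =
        -(E n 0 (by omega) + E n 1 (by omega)) + (-1 : ℤ) • (E n 0 (by omega) - E n 1 (by omega)) := by
      rw [← hs, ← hd, ← map_add, ← map_smul]
      congr 1
      module
    funext t
    have h := congrFun key t
    simp only [Pi.smul_apply, Pi.add_apply, Pi.neg_apply, Pi.sub_apply, E_apply, smul_eq_mul] at h ⊢
    split_ifs at h ⊢ <;> omega
  · have key : (2:ℤ) • ((ψ ^ (n-1)) (E n 1 (by omega))) =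
        -(E n 0 (by omega) + E n 1 (by omega)) - (-1 : ℤ) • (E n 0 (by omega) - E n 1 (by omega)) := by
      rw [← hs, ← hd, ← map_sub, ← map_smul]
      congr 1
      module
    funext t
    have h := congrFun key t
    simp only [Pi.smul_apply, Pi.add_apply, Pi.neg_apply, Pi.sub_apply, E_apply, smul_eq_mul] at h ⊢
    split_ifs at h ⊢ <;> omega

lemma pow_order (hψ : ∀ i, ψ (piD n i) = - iotaD n i) (hn : 3 ≤ n) :
    ψ ^ (2 * (n - 1)) = 1 := by
  have hdecomp : ψ ^ (2 * (n-1)) = ψ ^ (n-1) * ψ ^ (n-1) := by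
    rw [← pow_add]; congr 1; omega
  apply Module.Basis.ext (Pi.basisFun ℤ (Fin n))
  intro i
  rcases i with ⟨k, hk⟩
  have hbas : (Pi.basisFun ℤ (Fin n)) ⟨k, hk⟩ = E n k hk := by
    rw [Pi.basisFun_apply]; rfl
  rw [hbas, hdecomp, Module.End.mul_apply, Module.End.one_apply]
  rcases Nat.lt_or_ge k 2 with hk2 | hk2
  · rcases Nat.even_or_odd n with he | ho
    · obtain ⟨h0, h1⟩ := pow_n1_0_even n ψ hψ hn he
      interval_cases k
      · rw [show E n 0 hk = E n 0 (by omega) from rfl, h0, map_neg, h0, neg_neg]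
      · rw [show E n 1 hk = E n 1 (by omega) from rfl, h1, map_neg, h1, neg_neg]
    · obtain ⟨h0, h1⟩ := pow_n1_0_odd n ψ hψ hn ho
      interval_cases k
      · rw [show E n 0 hk = E n 0 (by omega) from rfl, h0, map_neg, h1, neg_neg]
      · rw [show E n 1 hk = E n 1 (by omega) from rfl, h1, map_neg, h0, neg_neg]
  · have h := pow_n1_high n ψ hψ hn k hk2 (by omega) hk
    rw [h, map_neg, h, neg_neg]

end Pow
section Coker
variable (n : ℕ) (ψ : Module.End ℤ (Fin n → ℤ))

lemma col0 (hψ : ∀ i, ψ (piD n i) = - iotaD n i) (hn : 3 ≤ n) :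
    ((1:Module.End ℤ (Fin n → ℤ)) + ψ) (E n 0 (by omega))
      = E n 0 (by omega) + E n 1 (by omega) + E n 2 (by omega) := by
  rw [LinearMap.add_apply, Module.End.one_apply, psi0 n ψ hψ hn, add_assoc]

lemma col1 (hψ : ∀ i, ψ (piD n i) = - iotaD n i) (hn : 3 ≤ n) :
    ((1:Module.End ℤ (Fin n → ℤ)) + ψ) (E n 1 (by omega))
      = E n 0 (by omega) + E n 1 (by omega) + E n 2 (by omega) := by
  rw [LinearMap.add_apply, Module.End.one_apply, psi1 n ψ hψ hn]
  abel

lemma colmid (hψ : ∀ i, ψ (piD n i) = - iotaD n i) (j : ℕ) (h2 : 2 ≤ j)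
    (h1 : j < n) (h1' : j + 1 < n) :
    ((1:Module.End ℤ (Fin n → ℤ)) + ψ) (E n j h1) = E n j h1 + E n (j+1) h1' := by
  rw [LinearMap.add_apply, Module.End.one_apply, psi_mid n ψ hψ j h2 (by omega) h1 h1']

lemma collast (hψ : ∀ i, ψ (piD n i) = - iotaD n i) (hn : 3 ≤ n) :
    ((1:Module.End ℤ (Fin n → ℤ)) + ψ) (E n (n-1) (by omega)) = W n := by
  rw [LinearMap.add_apply, Module.End.one_apply, psi_last n ψ hψ hn]
  funext t
  have ht := t.isLt
  simp only [E_apply, W, ones, Pi.add_apply, Pi.neg_apply]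
  split_ifs <;> omega

lemma memW (hψ : ∀ i, ψ (piD n i) = - iotaD n i) (hn : 3 ≤ n) :
    W n ∈ LinearMap.range ((1:Module.End ℤ (Fin n → ℤ)) + ψ) :=
  ⟨E n (n-1) (by omega), collast n ψ hψ hn⟩

lemma mem_T_down (hψ : ∀ i, ψ (piD n i) = - iotaD n i) (hn : 3 ≤ n) :
    ∀ t, 2 * t ≤ n - 3 → T n (n-1-2*t) ∈ LinearMap.range ((1:Module.End ℤ (Fin n → ℤ)) + ψ) := by
  intro t
  induction t with
  | zero =>
    intro _
    have hz : T n (n-1-2*0) = 0 := by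
      funext s
      have hs := s.isLt
      simp only [T, Pi.zero_apply]
      split_ifs <;> omega
    rw [hz]; exact zero_mem _
  | succ t ih =>
    intro ht
    have hstep : T n (n-1-2*(t+1)) =
        (E n (n-1-2*(t+1)) (by omega) + E n (n-1-2*(t+1)+1) (by omega)) + T n (n-1-2*t) := by
      funext s
      simp only [T, E_apply, Pi.add_apply]
      split_ifs <;> omega
    rw [hstep]
    exact add_mem ⟨E n (n-1-2*(t+1)) (by omega),
      colmid n ψ hψ (n-1-2*(t+1)) (by omega) (by omega) (by omega)⟩ (ih (by omega))

lemma mem_T0 (hψ : ∀ i, ψ (piD n i) = - iotaD n i) (hn : 3 ≤ n) :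
    T n 0 ∈ LinearMap.range ((1:Module.End ℤ (Fin n → ℤ)) + ψ) := by
  have h : T n 0 = -(W n) := by
    funext s
    simp only [T, W, Pi.neg_apply]
    split_ifs <;> omega
  rw [h]
  exact neg_mem (memW n ψ hψ hn)

lemma mem_e01 (hψ : ∀ i, ψ (piD n i) = - iotaD n i) (hn : 3 ≤ n) (ho : n % 2 = 1) :
    E n 0 (by omega) + E n 1 (by omega) ∈
      LinearMap.range ((1:Module.End ℤ (Fin n → ℤ)) + ψ) := by
  have hT2 : T n 2 ∈ LinearMap.range ((1:Module.End ℤ (Fin n → ℤ)) + ψ) := by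
    have := mem_T_down n ψ hψ hn ((n-3)/2) (by omega)
    rwa [show n-1-2*((n-3)/2) = 2 by omega] at this
  have h : E n 0 (by omega) + E n 1 (by omega) = T n 0 - T n 2 := by
    funext s
    simp only [T, E_apply, Pi.add_apply, Pi.sub_apply]
    split_ifs <;> omega
  rw [h]
  exact sub_mem (mem_T0 n ψ hψ hn) hT2

lemma mem_e2 (hψ : ∀ i, ψ (piD n i) = - iotaD n i) (hn : 3 ≤ n) (ho : n % 2 = 1) :
    E n 2 (by omega) ∈ LinearMap.range ((1:Module.End ℤ (Fin n → ℤ)) + ψ) := by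
  have h : E n 2 (by omega) = (E n 0 (by omega) + E n 1 (by omega) + E n 2 (by omega))
      - (E n 0 (by omega) + E n 1 (by omega)) := by abel
  rw [h]
  exact sub_mem ⟨E n 0 (by omega), col0 n ψ hψ hn⟩ (mem_e01 n ψ hψ hn ho)

lemma mem_high (hψ : ∀ i, ψ (piD n i) = - iotaD n i) (hn : 3 ≤ n) (ho : n % 2 = 1) :
    ∀ j, 2 ≤ j → ∀ (hj : j < n),
      E n j hj ∈ LinearMap.range ((1:Module.End ℤ (Fin n → ℤ)) + ψ) := by
  intro j
  induction j with
  | zero => omega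
  | succ j ih =>
    intro h2 hj
    rcases Nat.lt_or_ge j 2 with hj2 | hj2
    · have hj1 : j = 1 := by omega
      subst hj1
      exact mem_e2 n ψ hψ hn ho
    · have h : E n (j+1) hj = (E n j (by omega) + E n (j+1) hj) - E n j (by omega) := by abel
      rw [h]
      exact sub_mem ⟨E n j (by omega), colmid n ψ hψ j hj2 (by omega) hj⟩ (ih hj2 (by omega))

lemma mem_sign (hψ : ∀ i, ψ (piD n i) = - iotaD n i) (hn : 3 ≤ n) :
    ∀ j, 2 ≤ j → ∀ (hj : j < n),
      E n j hj - ((-1:ℤ)^j) • E n 2 (by omega) ∈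
        LinearMap.range ((1:Module.End ℤ (Fin n → ℤ)) + ψ) := by
  intro j
  induction j with
  | zero => omega
  | succ j ih =>
    intro h2 hj
    rcases Nat.lt_or_ge j 2 with hj2 | hj2
    · have hj1 : j = 1 := by omega
      subst hj1
      have h : E n 2 hj - ((-1:ℤ)^2) • E n 2 (by omega) = 0 := by norm_num
      rw [h]; exact zero_mem _
    · have h : E n (j+1) hj - ((-1:ℤ)^(j+1)) • E n 2 (by omega) =
          (E n j (by omega) + E n (j+1) hj) -
            (E n j (by omega) - ((-1:ℤ)^j) • E n 2 (by omega)) := by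
        rw [pow_succ]
        module
      rw [h]
      exact sub_mem ⟨E n j (by omega), colmid n ψ hψ j hj2 (by omega) hj⟩ (ih hj2 (by omega))

end Coker
section Funct
variable (n : ℕ)

def coefA : Fin n → ℤ := fun j => if (j:ℕ) = 0 then 1 else if (j:ℕ) = 1 then -1 else 0

def coefB : Fin n → ℤ := fun j => if (j:ℕ) = 1 then -1 else if 2 ≤ (j:ℕ) then (-1)^(j:ℕ) else 0

def genL (c : Fin n → ℤ) : (Fin n → ℤ) →ₗ[ℤ] ℤ where
  toFun v := ∑ j, c j * v j
  map_add' u v := by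
    simp [mul_add, Finset.sum_add_distrib]
  map_smul' a v := by
    simp [Finset.mul_sum, smul_eq_mul, mul_left_comm]

lemma genL_single (c : Fin n → ℤ) (k : ℕ) (hk : k < n) :
    genL n c (E n k hk) = c ⟨k, hk⟩ := by
  simp [genL, E, Pi.single_apply, mul_ite, Finset.sum_ite_eq']

lemma sum01 (x y : ℤ) : ∀ N, 2 ≤ N →
    ∑ k ∈ Finset.range N, (if k = 0 then x else if k = 1 then y else 0) = x + y := by
  intro N
  induction N with
  | zero => omega
  | succ N ih =>
    intro h
    rcases Nat.lt_or_ge N 2 with h2 | h2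
    · have : N = 1 := by omega
      subst this
      simp [Finset.sum_range_succ]
    · rw [Finset.sum_range_succ, ih h2, if_neg (by omega), if_neg (by omega), add_zero]

lemma sumB : ∀ N, ∑ k ∈ Finset.range N, (if k = 1 then (1:ℤ) else if 2 ≤ k then -(-1)^k else 0)
    = if N ≤ 1 then 0 else if N % 2 = 0 then 1 else 0 := by
  intro N
  induction N with
  | zero => simp
  | succ N ih =>
    rw [Finset.sum_range_succ, ih]
    rcases Nat.even_or_odd N with h | h
    · have hp : (-1:ℤ)^N = 1 := h.neg_one_pow
      have hm : N % 2 = 0 := Nat.even_iff.mp h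
      rw [hp]
      split_ifs <;> omega
    · have hp : (-1:ℤ)^N = -1 := h.neg_one_pow
      have hm : N % 2 = 1 := Nat.odd_iff.mp h
      rw [hp]
      split_ifs <;> omega

lemma AW (hn : 3 ≤ n) : genL n (coefA n) (W n) = 0 := by
  show ∑ j : Fin n, coefA n j * W n j = 0
  have h1 : ∑ j : Fin n, coefA n j * W n j =
      ∑ k ∈ Finset.range n, ((if k = 0 then (1:ℤ) else if k = 1 then -1 else 0) *
        (if k ≤ n-2 then -1 else 0)) := by
    exact Fin.sum_univ_eq_sum_range (fun k => (if k = 0 then (1:ℤ) else if k = 1 then -1 else 0) *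
      (if k ≤ n-2 then -1 else 0)) n
  rw [h1, Finset.sum_congr rfl
    (fun k _ => show ((if k = 0 then (1:ℤ) else if k = 1 then -1 else 0) *
        (if k ≤ n-2 then -1 else 0)) = (if k = 0 then (-1:ℤ) else if k = 1 then 1 else 0) by
      split_ifs <;> omega), sum01 (-1) 1 n (by omega)]
  norm_num

lemma BW (hn : 3 ≤ n) (he : n % 2 = 0) : genL n (coefB n) (W n) = 0 := by
  show ∑ j : Fin n, coefB n j * W n j = 0
  have h1 : ∑ j : Fin n, coefB n j * W n j =
      ∑ k ∈ Finset.range n, ((if k = 1 then (-1:ℤ) else if 2 ≤ k then (-1)^k else 0) *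
        (if k ≤ n-2 then -1 else 0)) := by
    exact Fin.sum_univ_eq_sum_range (fun k => (if k = 1 then (-1:ℤ) else if 2 ≤ k then (-1)^k else 0) *
      (if k ≤ n-2 then -1 else 0)) n
  have h2 : Finset.range n = Finset.range ((n-1)+1) := by congr 1; omega
  rw [h1, h2, Finset.sum_range_succ, if_neg (show ¬ (n-1 ≤ n-2) by omega), mul_zero, add_zero,
    Finset.sum_congr rfl (fun k hk => show ((if k = 1 then (-1:ℤ) else if 2 ≤ k then (-1)^k else 0) *
        (if k ≤ n-2 then -1 else 0)) =
      (if k = 1 then (1:ℤ) else if 2 ≤ k then -(-1)^k else 0) by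
        have hk' : k < n - 1 := Finset.mem_range.mp hk
        rw [if_pos (show k ≤ n-2 by omega)]
        split_ifs <;> ring), sumB (n-1)]
  rw [if_neg (show ¬ (n-1 ≤ 1) by omega), if_neg (show ¬ ((n-1) % 2 = 0) by omega)]

end Funct
section Main
variable (n : ℕ) (ψ : Module.End ℤ (Fin n → ℤ))

lemma coefA_mk (k : ℕ) (hk : k < n) :
    coefA n ⟨k, hk⟩ = if k = 0 then 1 else if k = 1 then (-1:ℤ) else 0 := rfl

lemma coefB_mk (k : ℕ) (hk : k < n) :
    coefB n ⟨k, hk⟩ = if k = 1 then (-1:ℤ) else if 2 ≤ k then (-1)^k else 0 := rfl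

lemma kerA (hψ : ∀ i, ψ (piD n i) = - iotaD n i) (hn : 3 ≤ n) :
    (genL n (coefA n)).comp ((1:Module.End ℤ (Fin n → ℤ)) + ψ) = 0 := by
  apply Module.Basis.ext (Pi.basisFun ℤ (Fin n))
  rintro ⟨k, hk⟩
  rw [Pi.basisFun_apply]
  have hE : (Pi.single (⟨k, hk⟩ : Fin n) (1:ℤ)) = E n k hk := rfl
  rw [hE, LinearMap.comp_apply, LinearMap.zero_apply]
  rcases Nat.lt_or_ge k 2 with h2 | h2
  · interval_cases k
    · rw [show (E n 0 hk) = E n 0 (by omega) from rfl, col0 n ψ hψ hn, map_add, map_add,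
        genL_single, genL_single, genL_single, coefA_mk, coefA_mk, coefA_mk]
      norm_num
    · rw [show (E n 1 hk) = E n 1 (by omega) from rfl, col1 n ψ hψ hn, map_add, map_add,
        genL_single, genL_single, genL_single, coefA_mk, coefA_mk, coefA_mk]
      norm_num
  · rcases Nat.lt_or_ge k (n-1) with hlt | hge
    · rw [colmid n ψ hψ k h2 hk (by omega), map_add, genL_single, genL_single,
        coefA_mk, coefA_mk]
      split_ifs <;> first | omega | simp_all
    · rw [E_congr n k (n-1) (by omega) hk (by omega), collast n ψ hψ hn, AW n hn]

lemma kerB (hψ : ∀ i, ψ (piD n i) = - iotaD n i) (hn : 3 ≤ n) (he : n % 2 = 0) :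
    (genL n (coefB n)).comp ((1:Module.End ℤ (Fin n → ℤ)) + ψ) = 0 := by
  apply Module.Basis.ext (Pi.basisFun ℤ (Fin n))
  rintro ⟨k, hk⟩
  rw [Pi.basisFun_apply]
  have hE : (Pi.single (⟨k, hk⟩ : Fin n) (1:ℤ)) = E n k hk := rfl
  rw [hE, LinearMap.comp_apply, LinearMap.zero_apply]
  rcases Nat.lt_or_ge k 2 with h2 | h2
  · interval_cases k
    · rw [show (E n 0 hk) = E n 0 (by omega) from rfl, col0 n ψ hψ hn, map_add, map_add,
        genL_single, genL_single, genL_single, coefB_mk, coefB_mk, coefB_mk]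
      norm_num
    · rw [show (E n 1 hk) = E n 1 (by omega) from rfl, col1 n ψ hψ hn, map_add, map_add,
        genL_single, genL_single, genL_single, coefB_mk, coefB_mk, coefB_mk]
      norm_num
  · rcases Nat.lt_or_ge k (n-1) with hlt | hge
    · rw [colmid n ψ hψ k h2 hk (by omega), map_add, genL_single, genL_single,
        coefB_mk, coefB_mk]
      rw [if_neg (show ¬ (k = 1) by omega), if_neg (show ¬ (k + 1 = 1) by omega),
        if_pos h2, if_pos (show 2 ≤ k + 1 by omega), pow_succ]
      ring
    · rw [E_congr n k (n-1) (by omega) hk (by omega), collast n ψ hψ hn, BW n hn he]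

end Main
theorem stmt19 (n : ℕ) (hn : 3 ≤ n) (ψ : Module.End ℤ (Fin n → ℤ))
    (hψ : ∀ i, ψ (piD n i) = - iotaD n i)
    (p : ℕ) (hp : 1 ≤ p) (hp1 : p ≡ 1 [MOD 2 * (n - 1)]) :
    Odd p ∧
    (Odd n → Nonempty
      (((Fin n → ℤ) ⧸ LinearMap.range
          ((1 : Module.End ℤ (Fin n → ℤ)) + ψ ^ p)) ≃+ ℤ)) ∧
    (Even n → Nonempty
      (((Fin n → ℤ) ⧸ LinearMap.range
          ((1 : Module.End ℤ (Fin n → ℤ)) + ψ ^ p)) ≃+ ℤ × ℤ)) := by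
  have hmod : p % (2*(n-1)) = 1 := by
    have h := hp1
    unfold Nat.ModEq at h
    rwa [Nat.mod_eq_of_lt (show 1 < 2*(n-1) by omega)] at h
  have hpq : p = 2*(n-1) * (p / (2*(n-1))) + 1 := by
    have := Nat.div_add_mod p (2*(n-1))
    omega
  have hψp : ψ ^ p = ψ := by
    conv_lhs => rw [hpq]
    rw [pow_succ, pow_mul, pow_order n ψ hψ hn, one_pow, one_mul]
  have h3 : p = 2*((n-1) * (p / (2*(n-1)))) + 1 := by
    conv_lhs => rw [hpq]
    ring
  refine ⟨Nat.odd_iff.mpr (by omega), ?_, ?_⟩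
  · -- n odd
    intro hoddn
    have ho : n % 2 = 1 := Nat.odd_iff.mp hoddn
    rw [hψp]
    have hker : LinearMap.range ((1:Module.End ℤ (Fin n → ℤ)) + ψ) ≤
        LinearMap.ker (genL n (coefA n)) := by
      rintro x ⟨v, rfl⟩
      rw [LinearMap.mem_ker, ← LinearMap.comp_apply, kerA n ψ hψ hn, LinearMap.zero_apply]
    set M := LinearMap.range ((1:Module.End ℤ (Fin n → ℤ)) + ψ) with hM
    set F := M.liftQ (genL n (coefA n)) hker with hF
    set e0q := Submodule.Quotient.mk (p := M) (E n 0 (by omega)) with he0q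
    set G := LinearMap.toSpanSingleton ℤ _ e0q with hG
    refine ⟨(LinearEquiv.ofLinear F G ?_ ?_).toAddEquiv⟩
    · apply LinearMap.ext_ring
      rw [LinearMap.comp_apply, LinearMap.id_apply, hG, LinearMap.toSpanSingleton_apply_one,
        he0q, hF, Submodule.liftQ_apply, genL_single, coefA_mk]
      norm_num
    · apply Submodule.linearMap_qext
      apply Module.Basis.ext (Pi.basisFun ℤ (Fin n))
      rintro ⟨k, hk⟩
      rw [Pi.basisFun_apply]
      have hE : (Pi.single (⟨k, hk⟩ : Fin n) (1:ℤ)) = E n k hk := rfl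
      rw [hE, LinearMap.comp_apply, LinearMap.comp_apply, Submodule.mkQ_apply,
        LinearMap.id_comp, hF, Submodule.liftQ_apply, genL_single, coefA_mk, hG,
        LinearMap.toSpanSingleton_apply, he0q, ← Submodule.Quotient.mk_smul,
        Submodule.mkQ_apply, Submodule.Quotient.eq]
      rcases Nat.lt_or_ge k 2 with h2 | h2
      · interval_cases k
        · rw [if_pos rfl]
          have : (1:ℤ) • E n 0 (by omega : 0 < n) - E n 0 hk = 0 := by
            rw [one_smul]; exact sub_self _
          rw [this]; exact zero_mem _
        · rw [if_neg (by omega), if_pos rfl]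
          have : (-1:ℤ) • E n 0 (by omega : 0 < n) - E n 1 hk =
              -(E n 0 (by omega : 0 < n) + E n 1 (by omega : 1 < n)) := by
            module
          rw [this]
          exact neg_mem (mem_e01 n ψ hψ hn ho)
      · rw [if_neg (by omega), if_neg (by omega)]
        have : (0:ℤ) • E n 0 (by omega : 0 < n) - E n k hk = -(E n k hk) := by module
        rw [this]
        exact neg_mem (mem_high n ψ hψ hn ho k h2 hk)
  · -- n even
    intro hevenn
    have he : n % 2 = 0 := Nat.even_iff.mp hevenn
    rw [hψp]
    have hker : LinearMap.range ((1:Module.End ℤ (Fin n → ℤ)) + ψ) ≤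
        LinearMap.ker ((genL n (coefA n)).prod (genL n (coefB n))) := by
      rintro x ⟨v, rfl⟩
      rw [LinearMap.mem_ker, LinearMap.prod_apply, Function.prod, ← LinearMap.comp_apply,
        ← LinearMap.comp_apply, kerA n ψ hψ hn, kerB n ψ hψ hn he]
      simp
    set M := LinearMap.range ((1:Module.End ℤ (Fin n → ℤ)) + ψ) with hM
    set F := M.liftQ ((genL n (coefA n)).prod (genL n (coefB n))) hker with hF
    set e0q := Submodule.Quotient.mk (p := M) (E n 0 (by omega)) with he0q
    set e2q := Submodule.Quotient.mk (p := M) (E n 2 (by omega)) with he2q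
    set G := (LinearMap.toSpanSingleton ℤ _ e0q).coprod (LinearMap.toSpanSingleton ℤ _ e2q)
      with hG
    refine ⟨(LinearEquiv.ofLinear F G ?_ ?_).toAddEquiv⟩
    · apply LinearMap.ext
      rintro ⟨a, b⟩
      rw [LinearMap.comp_apply, LinearMap.id_apply, hG, LinearMap.coprod_apply,
        LinearMap.toSpanSingleton_apply, LinearMap.toSpanSingleton_apply, map_add,
        map_smul, map_smul, he0q, he2q, hF, Submodule.liftQ_apply, Submodule.liftQ_apply,
        LinearMap.prod_apply, LinearMap.prod_apply]
      simp only [Function.prod, genL_single, coefA_mk, coefB_mk]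
      norm_num
    · apply Submodule.linearMap_qext
      apply Module.Basis.ext (Pi.basisFun ℤ (Fin n))
      rintro ⟨k, hk⟩
      rw [Pi.basisFun_apply]
      have hE : (Pi.single (⟨k, hk⟩ : Fin n) (1:ℤ)) = E n k hk := rfl
      rw [hE, LinearMap.comp_apply, LinearMap.comp_apply, Submodule.mkQ_apply,
        LinearMap.id_comp, hF, Submodule.liftQ_apply, LinearMap.prod_apply, Function.prod,
        genL_single, genL_single, coefA_mk, coefB_mk, hG, LinearMap.coprod_apply,
        LinearMap.toSpanSingleton_apply, LinearMap.toSpanSingleton_apply, he0q, he2q,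
        ← Submodule.Quotient.mk_smul, ← Submodule.Quotient.mk_smul,
        ← Submodule.Quotient.mk_add, Submodule.mkQ_apply, Submodule.Quotient.eq]
      rcases Nat.lt_or_ge k 2 with h2 | h2
      · interval_cases k
        · rw [if_pos rfl, if_neg (by omega), if_neg (by omega)]
          have : (1:ℤ) • E n 0 (by omega : 0 < n) + (0:ℤ) • E n 2 (by omega : 2 < n)
              - E n 0 hk = 0 := by module
          rw [this]; exact zero_mem _
        · rw [if_neg (by omega), if_pos rfl, if_pos rfl]
          have : (-1:ℤ) • E n 0 (by omega : 0 < n) + (-1:ℤ) • E n 2 (by omega : 2 < n)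
              - E n 1 hk = -(E n 0 (by omega : 0 < n) + E n 1 (by omega : 1 < n)
                + E n 2 (by omega : 2 < n)) := by module
          rw [this]
          exact neg_mem ⟨E n 0 (by omega), col0 n ψ hψ hn⟩
      · rw [if_neg (by omega), if_neg (by omega), if_neg (by omega), if_pos h2]
        have : (0:ℤ) • E n 0 (by omega : 0 < n) + ((-1:ℤ)^k) • E n 2 (by omega : 2 < n)
            - E n k hk = -(E n k hk - ((-1:ℤ)^k) • E n 2 (by omega : 2 < n)) := by module
        rw [this]
        exact neg_mem (mem_sign n ψ hψ hn k h2 hk)
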